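/- arXiv:1503.04262 — 4 statements merged into one kernel-verified Lean document; each statement's English description precedes it below -/
import Mathlib

section
/- For all ζ in the open upper half-plane, (1/(2πi)) ∫_{-∞}^{∞} e^{-u²} du/(u - ζ) = (1/2) e^{-ζ²} erfc(-iζ). -/
/-!
Write `1 / (u - ζ) = i ∫₀^∞ e^{i(ζ - u)t} dt`, valid since `Im ζ > 0`, and exchange the order of
integration (Fubini): the Cauchy transform of an integrable `f` becomes a Laplace-type integral
of the Fourier transform of `f`. For the Gaussian the inner integral is `√π e^{-t²/4}`, and the
substitution `t = 2s` together with completing the square `i ζ t - t²/4 = -ζ² - (s - iζ)²`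
turns the remaining integral into `√π e^{-ζ²} erfc(-iζ)`.
-/

open Complex MeasureTheory

/-- The complementary error function along a horizontal ray. -/
noncomputable def erfc (z : ℂ) : ℂ :=
  (2 / Real.sqrt Real.pi) * ∫ t in Set.Ioi (0 : ℝ), Complex.exp (-(z + t) ^ 2)

open Set

theorem integral_Ioi_cexp_I_mul {w : ℂ} (hw : 0 < w.im) :
    ∫ t in Ioi (0 : ℝ), cexp (I * w * t) = I / w := by
  have hw0 : w ≠ 0 := fun h => by simp [h] at hw
  rw [integral_exp_mul_complex_Ioi (by simpa using hw)]
  field_simp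
  simp

theorem integral_div_sub_eq_I_mul_integral_Ioi {f : ℝ → ℂ} (hf : Integrable f) {ζ : ℂ}
    (hζ : 0 < ζ.im) :
    ∫ u : ℝ, f u / (u - ζ) =
      I * ∫ t in Ioi (0 : ℝ), cexp (I * ζ * t) * ∫ u : ℝ, cexp (-(I * t * u)) * f u := by
  set G : ℝ → ℝ → ℂ := fun u t => cexp (I * ζ * t) * (cexp (-(I * t * u)) * f u)
  have hG : Integrable (Function.uncurry G) (volume.prod (volume.restrict (Ioi 0))) := by
    refine (hf.norm.mul_prod (exp_neg_integrableOn_Ioi 0 hζ)).mono' ?_ ?_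
    · exact (Continuous.aestronglyMeasurable (by fun_prop)).mul
        ((Continuous.aestronglyMeasurable (by fun_prop)).mul hf.aestronglyMeasurable.comp_fst)
    · filter_upwards with p
      simp [G, Function.uncurry, Complex.norm_exp, mul_comm]
  have hkernel (u : ℝ) : f u / (u - ζ) = I * ∫ t in Ioi (0 : ℝ), G u t := by
    have hw : 0 < (ζ - u).im := by simpa using hζ
    have hne : ζ - u ≠ 0 := fun h => by simp [h] at hw
    have hne' : (u : ℂ) - ζ ≠ 0 := fun h => hne (by linear_combination -h)
    calc f u / (u - ζ) = I * (f u * ∫ t in Ioi (0 : ℝ), cexp (I * (ζ - u) * t)) := by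
          rw [integral_Ioi_cexp_I_mul hw]
          field_simp
          linear_combination (ζ - u) * f u * I_sq
      _ = I * ∫ t in Ioi (0 : ℝ), G u t := by
          rw [← integral_const_mul]
          congr 2 with t
          simp only [G, ← mul_assoc, ← Complex.exp_add]
          rw [mul_comm]
          ring_nf
  simp_rw [hkernel, integral_const_mul, integral_integral_swap hG, G, integral_const_mul]

theorem integral_cexp_neg_I_mul_mul_cexp_neg_sq (t : ℝ) :
    ∫ u : ℝ, cexp (-(I * t * u)) * cexp (-(u : ℂ) ^ 2) =
      Real.sqrt Real.pi * cexp (-(t : ℂ) ^ 2 / 4) := by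
  have hsqrt : (Real.pi : ℂ) ^ (1 / 2 : ℂ) = Real.sqrt Real.pi := by
    rw [Real.sqrt_eq_rpow, ofReal_cpow Real.pi_pos.le]
    norm_num
  convert fourierIntegral_gaussian (b := 1) (by norm_num) (-t) using 1
  · simp only [mul_neg, neg_mul, one_mul]
  · rw [div_one, hsqrt, mul_one, neg_sq]

theorem integral_Ioi_cexp_I_mul_sub_sq_div_four (ζ : ℂ) :
    ∫ t in Ioi (0 : ℝ), cexp (I * ζ * t - (t : ℂ) ^ 2 / 4) =
      Real.sqrt Real.pi * cexp (-ζ ^ 2) * erfc (-I * ζ) := by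
  have hsub :=
    integral_comp_mul_left_Ioi (fun t : ℝ => cexp (I * ζ * t - (t : ℂ) ^ 2 / 4)) 0 two_pos
  have hshift : ∫ s in Ioi (0 : ℝ), cexp (I * ζ * ↑(2 * s) - ↑(2 * s) ^ 2 / 4) =
      cexp (-ζ ^ 2) * ∫ s in Ioi (0 : ℝ), cexp (-(-I * ζ + s) ^ 2) := by
    rw [← integral_const_mul]
    congr 1 with s
    rw [← Complex.exp_add]
    congr 1
    push_cast
    linear_combination ζ ^ 2 * I_sq
  rw [mul_zero, hshift, Complex.real_smul] at hsub
  have hpi : (Real.sqrt Real.pi : ℂ) ≠ 0 :=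
    ofReal_ne_zero.mpr (Real.sqrt_ne_zero'.mpr Real.pi_pos)
  rw [erfc]
  generalize ∫ s in Ioi (0 : ℝ), cexp (-(-I * ζ + s) ^ 2) = J at hsub ⊢
  generalize ∫ t in Ioi (0 : ℝ), cexp (I * ζ * t - (t : ℂ) ^ 2 / 4) = K at hsub ⊢
  field_simp
  push_cast at hsub
  linear_combination -2 * hsub

/-- for `ζ` in the open upper half-plane,
`(1/(2πi)) ∫_ℝ e^{-u²}/(u - ζ) du = (1/2) e^{-ζ²} erfc(-iζ)`. -/
theorem stmt_4 (ζ : ℂ) (hζ : 0 < ζ.im) :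
    (1 / (2 * Real.pi * I)) * ∫ u : ℝ, Complex.exp (-(u : ℂ) ^ 2) / ((u : ℂ) - ζ)
      = (1 / 2) * Complex.exp (-ζ ^ 2) * erfc (-I * ζ) := by
  have hgauss : Integrable fun u : ℝ => cexp (-(u : ℂ) ^ 2) := by
    simpa using integrable_cexp_neg_mul_sq (b := 1) (by norm_num)
  have hlaplace :
      ∫ t in Ioi (0 : ℝ), cexp (I * ζ * t) * (Real.sqrt Real.pi * cexp (-(t : ℂ) ^ 2 / 4)) =
      Real.sqrt Real.pi * ∫ t in Ioi (0 : ℝ), cexp (I * ζ * t - (t : ℂ) ^ 2 / 4) := by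
    rw [← integral_const_mul]
    congr 1 with t
    rw [sub_eq_add_neg, Complex.exp_add, neg_div]
    ring
  have hpi : (Real.sqrt Real.pi : ℂ) ^ 2 = Real.pi := by
    rw [← ofReal_pow, Real.sq_sqrt Real.pi_pos.le]
  rw [integral_div_sub_eq_I_mul_integral_Ioi hgauss hζ]
  simp_rw [integral_cexp_neg_I_mul_mul_cexp_neg_sq]
  rw [hlaplace, integral_Ioi_cexp_I_mul_sub_sq_div_four]
  field_simp
  rw [hpi]
end

section
/- Let p_n(z) = ∑_{k=0}^n z^k/k! be the nth partial sum of the exponential series. Then p_n has no zero in the region {x + iy : x > -1 and y² ≤ 4(x+1)}, for every n ≥ 0. -/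
/-!
Write `p_n` for the partial sums and `q_n = p_{n+1} / p_n`. The recursion
`p_{n+2} = p_{n+1} + z/(n+2) · (p_{n+1} - p_n)` gives `q_{n+1} = 1 + (z - z/q_n)/(n+2)`.
For `z` in the parabola, `Re (z/q) ≤ m` as soon as `Re z + 1 ≤ m Re q`; hence the invariant
`(Re z + 1)/(n+1) ≤ Re q_n` propagates by induction, and it forces every `p_n` to be nonzero.
-/

open Complex Finset

open scoped Nat

theorem Complex.re_div_le_of_im_sq_le {z q : ℂ} {m : ℝ} (hm : 0 < m)
    (hz : z.im ^ 2 ≤ 4 * (z.re + 1)) (hq : z.re + 1 ≤ m * q.re) : (z / q).re ≤ m := by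
  rcases eq_or_ne q 0 with rfl | hq0
  · simpa using hm.le
  have hN : 0 < normSq q := normSq_pos.mpr hq0
  have hfactor : 0 ≤ (m * q.re - (z.re + 1)) * (m * q.re + 1) :=
    mul_nonneg (by linarith) (by nlinarith [sq_nonneg z.im])
  rw [div_re, ← add_div, div_le_iff₀ hN, normSq_apply]
  -- with `z = x + iy`, `q = a + ib`, and using `y² ≤ 4(x+1)`:
  -- `m(a² + b²) - xa - yb ≥ (2mb - y)²/(4m) + (ma - (x+1))(ma + 1)/m ≥ 0`
  nlinarith [sq_nonneg (2 * m * q.im - z.im), mul_pos hm hm]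

noncomputable def expPartialSum (n : ℕ) (z : ℂ) : ℂ := ∑ k ∈ range (n + 1), z ^ k / k !

theorem expPartialSum_zero (z : ℂ) : expPartialSum 0 z = 1 := by
  simp [expPartialSum]

theorem expPartialSum_one (z : ℂ) : expPartialSum 1 z = 1 + z := by
  simp [expPartialSum, sum_range_succ]

theorem expPartialSum_succ (n : ℕ) (z : ℂ) :
    expPartialSum (n + 1) z = expPartialSum n z + z ^ (n + 1) / (n + 1)! := by
  simp only [expPartialSum, sum_range_succ _ (n + 1)]

theorem expPartialSum_add_two (n : ℕ) (z : ℂ) :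
    expPartialSum (n + 2) z =
      expPartialSum (n + 1) z + z / (n + 2) * (expPartialSum (n + 1) z - expPartialSum n z) := by
  rw [expPartialSum_succ (n + 1), expPartialSum_succ n, add_sub_cancel_left,
    Nat.factorial_succ (n + 1)]
  push_cast
  field_simp
  ring

theorem expPartialSum_ratio_re_ge {z : ℂ} (hre : -1 < z.re) (him : z.im ^ 2 ≤ 4 * (z.re + 1))
    (n : ℕ) : (z.re + 1) / (n + 1) ≤ (expPartialSum (n + 1) z / expPartialSum n z).re := by
  have hx : 0 < z.re + 1 := by linarith
  induction n with
  | zero => simp [expPartialSum_zero, expPartialSum_one, add_comm]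
  | succ n ih =>
    set q := expPartialSum (n + 1) z / expPartialSum n z with hq
    have hp : expPartialSum (n + 1) z ≠ 0 := by
      rintro h
      have : 0 < q.re := lt_of_lt_of_le (by positivity) ih
      simp [q, h] at this
    have hratio : expPartialSum (n + 2) z / expPartialSum (n + 1) z
        = 1 + (((n : ℝ) + 2)⁻¹ : ℝ) * (z - z / q) := by
      rw [expPartialSum_add_two, hq]
      push_cast
      field_simp
    have hkey : (z / q).re ≤ n + 1 :=
      re_div_le_of_im_sq_le (by positivity) him (by rwa [div_le_iff₀' (by positivity)] at ih)
    rw [hratio, add_re, one_re, re_ofReal_mul, sub_re, Nat.cast_succ, add_assoc, one_add_one_eq_two,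
      div_le_iff₀ (by positivity)]
    field_simp
    linarith

/-- Saff–Varga: no partial sum of `exp` has a zero in the
parabolic region `{x + iy : x > -1, y² ≤ 4(x+1)}`. -/
theorem stmt_9 (n : ℕ) (z : ℂ) (hre : -1 < z.re) (him : z.im ^ 2 ≤ 4 * (z.re + 1)) :
    ∑ k ∈ Finset.range (n + 1), z ^ k / (Nat.factorial k : ℂ) ≠ 0 := by
  intro hzero
  have hbound := expPartialSum_ratio_re_ge hre him n
  rw [show expPartialSum n z = 0 from hzero, div_zero, zero_re] at hbound
  have hx : 0 < z.re + 1 := by linarith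
  have : 0 < (z.re + 1) / (n + 1) := by positivity
  linarith
end

section
/- Every zero of the complementary error function erfc(z) = (2/√π)∫_z^∞ e^{-s²} ds lies in the open sector |arg z| < 3π/4 (equivalently, erfc has no zeros with Re(z e^{-iπ/4}) ≤ 0 on the boundary rays arg z = ±3π/4 or beyond), and erfc has no real zeros. -/
/-!
The integral of the entire function `e^{-s²}` along any horizontal line is `√π`, so
`erfc z + erfc (-z) = 2`. On the quarter-plane `|Im w| ≤ Re w` the integrand of `erfc w` is dominated
by `e^{-t²}`, so `‖erfc w‖ ≤ 1`. A zero `z` with `|Im z| ≤ -Re z` would therefore give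
`2 = ‖erfc (-z)‖ ≤ 1`, and the complement of that closed sector is `|arg z| < 3π/4`.
On the real line the integrand is positive.
-/

open Complex MeasureTheory

open Set
open scoped Real

lemma cexp_neg_add_sq_eq_quadratic (z : ℂ) :
    (fun t : ℝ => cexp (-(z + t) ^ 2)) = fun t : ℝ => cexp (-1 * t ^ 2 + -2 * z * t + -z ^ 2) := by
  funext t
  ring_nf

lemma integrable_cexp_neg_add_sq (z : ℂ) : Integrable fun t : ℝ => cexp (-(z + t) ^ 2) := by
  rw [cexp_neg_add_sq_eq_quadratic]
  exact integrable_cexp_quadratic (by norm_num) _ _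

lemma integral_cexp_neg_add_sq (z : ℂ) :
    ∫ t : ℝ, cexp (-(z + t) ^ 2) = (√π : ℝ) := by
  rw [cexp_neg_add_sq_eq_quadratic, integral_cexp_quadratic (by norm_num)]
  have h0 : -z ^ 2 - (-2 * z) ^ 2 / (4 * -1) = 0 := by ring
  rw [h0, Complex.exp_zero, mul_one, neg_neg, div_one, Real.sqrt_eq_rpow,
    ofReal_cpow Real.pi_pos.le]
  norm_num

lemma erfc_add_erfc_neg (z : ℂ) : erfc z + erfc (-z) = 2 := by
  have hreflect : ∫ t in Ioi (0 : ℝ), cexp (-(-z + t) ^ 2)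
      = ∫ t in Iic (0 : ℝ), cexp (-(z + t) ^ 2) := by
    rw [← neg_zero, ← integral_comp_neg_Ioi, neg_zero]
    congr 1; funext t; push_cast; ring_nf
  have hsplit := intervalIntegral.integral_Iic_add_Ioi (b := (0 : ℝ))
    (integrable_cexp_neg_add_sq z).integrableOn (integrable_cexp_neg_add_sq z).integrableOn
  have hpi : ((√π : ℝ) : ℂ) ≠ 0 := by exact_mod_cast (Real.sqrt_pos.mpr Real.pi_pos).ne'
  rw [erfc, erfc, hreflect, ← mul_add, add_comm, hsplit, integral_cexp_neg_add_sq]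
  field_simp

lemma norm_erfc_le_one {w : ℂ} (hw : |w.im| ≤ w.re) : ‖erfc w‖ ≤ 1 := by
  have hdom : ∀ t ∈ Ioi (0 : ℝ), ‖cexp (-(w + t) ^ 2)‖ ≤ Real.exp (-1 * t ^ 2) := by
    intro t (ht : 0 < t)
    have hre : (-(w + t) ^ 2).re = w.im ^ 2 - (w.re + t) ^ 2 := by
      simp [sq, mul_re]
    rw [norm_exp, hre, Real.exp_le_exp]
    nlinarith [sq_abs w.im, abs_nonneg w.im]
  have hint : ‖∫ t in Ioi (0 : ℝ), cexp (-(w + t) ^ 2)‖ ≤ √π / 2 := by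
    calc _ ≤ ∫ t in Ioi (0 : ℝ), Real.exp (-1 * t ^ 2) :=
          norm_integral_le_of_norm_le (integrable_exp_neg_mul_sq one_pos).integrableOn
            ((ae_restrict_iff' measurableSet_Ioi).mpr (Filter.Eventually.of_forall hdom))
      _ = √π / 2 := by simpa using integral_gaussian_Ioi 1
  have hpi : 0 < √π := Real.sqrt_pos.mpr Real.pi_pos
  rw [erfc, norm_mul, norm_div, Complex.norm_two, norm_real, Real.norm_of_nonneg hpi.le]
  calc 2 / √π * _ ≤ 2 / √π * (√π / 2) := by gcongr
    _ = 1 := by field_simp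

lemma erfc_ne_zero_of_abs_im_le_neg_re {z : ℂ} (hz : |z.im| ≤ -z.re) : erfc z ≠ 0 := by
  intro h0
  have h2 : erfc (-z) = 2 := by simpa [h0] using erfc_add_erfc_neg z
  have := norm_erfc_le_one (w := -z) (by simpa using hz)
  rw [h2, Complex.norm_two] at this
  norm_num at this

lemma abs_arg_lt_three_pi_div_four {z : ℂ} (hz : -z.re < |z.im|) :
    |arg z| < 3 * π / 4 := by
  have hz0 : z ≠ 0 := by rintro rfl; simp at hz
  have hnorm : 0 < ‖z‖ := norm_pos_iff.mpr hz0
  have hsq : ‖z‖ ^ 2 = z.re ^ 2 + z.im ^ 2 := by rw [Complex.sq_norm, normSq_apply]; ring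
  have hcos : Real.cos (3 * π / 4) = -(√2 / 2) := by
    rw [show 3 * π / 4 = π - π / 4 by ring, Real.cos_pi_sub, Real.cos_pi_div_four]
  have hre : -(√2 / 2) < z.re / ‖z‖ := by
    have h2 : √2 ^ 2 = 2 := Real.sq_sqrt (by norm_num)
    rw [lt_div_iff₀ hnorm]
    rcases le_or_gt 0 z.re with hre | hre
    · nlinarith [Real.sqrt_nonneg 2]
    · have him : z.re ^ 2 < z.im ^ 2 := by nlinarith [sq_abs z.im, abs_nonneg z.im]
      have : -2 * z.re < √2 * ‖z‖ :=
        lt_of_pow_lt_pow_left₀ 2 (by positivity) (by nlinarith)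
      linarith
  by_contra! hge
  have := Real.cos_le_cos_of_nonneg_of_le_pi (by positivity) (abs_arg_le_pi z) hge
  rw [Real.cos_abs, cos_arg hz0, hcos] at this
  linarith

lemma erfc_ofReal (x : ℝ) :
    erfc x = ((2 / √π * ∫ t in Ioi (0 : ℝ), Real.exp (-(x + t) ^ 2) : ℝ) : ℂ) := by
  rw [erfc, ofReal_mul, ← integral_complex_ofReal]
  push_cast
  rfl

lemma erfc_ofReal_ne_zero (x : ℝ) : erfc x ≠ 0 := by
  have hint : Integrable fun t : ℝ => Real.exp (-(x + t) ^ 2) := by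
    simpa [add_comm] using (integrable_exp_neg_mul_sq one_pos).comp_add_right x
  have hpos : 0 < ∫ t in Ioi (0 : ℝ), Real.exp (-(x + t) ^ 2) := by
    rw [setIntegral_pos_iff_support_of_nonneg_ae
      (Filter.Eventually.of_forall fun t => (Real.exp_pos _).le) hint.integrableOn]
    simp [Function.support, Real.exp_ne_zero]
  rw [erfc_ofReal, ofReal_ne_zero]
  have := Real.sqrt_pos.mpr Real.pi_pos
  positivity

/-- every zero of `erfc` lies in the open sector `|arg z| < 3π/4`,
and `erfc` has no real zeros. -/
theorem stmt_15 :
    (∀ z : ℂ, erfc z = 0 → |Complex.arg z| < 3 * Real.pi / 4) ∧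
    (∀ x : ℝ, erfc (x : ℂ) ≠ 0) :=
  ⟨fun _ hz => abs_arg_lt_three_pi_div_four
    (not_le.mp fun hle => erfc_ne_zero_of_abs_im_le_neg_re hle hz), erfc_ofReal_ne_zero⟩
end

section
/- Let λ > 0, r_n = (n/λ)^{1/λ}, and suppose f(z) = z^a (log z)^b exp(z^λ)(1 + o(1)) uniformly as |z| → ∞ in |arg z| ≤ θ. Then for z in a compact subset of {z ≠ 0 : |arg z| ≤ θ}, f(r_n z)/(r_n^a (log r_n)^b (e^{1/λ} z)^n) = z^a e^{nφ(z)} (1 + log z/log r_n)^b (1 + o(1)) as n → ∞, where φ(z) = (z^λ - 1 - log z^λ)/λ; in particular this ratio is asymptotic to z^a e^{nφ(z)} for fixed z. -/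
open Complex Filter Topology

/-- `φ(z) = (z^λ - 1 - log z^λ)/λ`, principal branches. -/
noncomputable def phi (lam : ℝ) (z : ℂ) : ℂ :=
  (z ^ (lam : ℂ) - 1 - Complex.log (z ^ (lam : ℂ))) / (lam : ℂ)

/-- `r_n = (n/λ)^{1/λ}`. -/
noncomputable def rn (lam : ℝ) (n : ℕ) : ℝ := ((n : ℝ) / lam) ^ (1 / lam)

/-!
Write `g(w) = w^a (log w)^b exp(w^λ)`. Since `r_n^λ = n/λ`, and `log (z^λ) = λ log z` on the sector
because `λθ < π`, `g(r_n z)` factors exactly as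
`r_n^a (log r_n)^b (e^{1/λ} z)^n · z^a e^{nφ(z)} (1 + log z / log r_n)^b`, so the ratio in the
first claim is `f(r_n z) / g(r_n z)`. The hypothesis says `f/g → 1` as `w → ∞` in the sector, and
`r_n z → ∞` uniformly for `z` bounded away from `0`. For fixed `z` the remaining factor
`(1 + log z / log r_n)^b` tends to `1`.
-/

open Asymptotics Bornology
open scoped Real

namespace Complex

lemma ofReal_mul_cpow {x : ℝ} (hx : 0 ≤ x) (z w : ℂ) :
    ((x : ℂ) * z) ^ w = (x : ℂ) ^ w * z ^ w := by
  rcases eq_or_ne w 0 with rfl | hw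
  · simp
  rcases hx.eq_or_lt with rfl | hx
  · simp [zero_cpow hw]
  rcases eq_or_ne z 0 with rfl | hz
  · simp [zero_cpow hw]
  have hx0 : (x : ℂ) ≠ 0 := ofReal_ne_zero.mpr hx.ne'
  rw [cpow_def_of_ne_zero (mul_ne_zero hx0 hz), cpow_def_of_ne_zero hx0, cpow_def_of_ne_zero hz,
    log_ofReal_mul hx hz, add_mul, exp_add, ofReal_log hx.le]

lemma log_cpow_ofReal {x : ℝ} {z : ℂ} (hz : z ≠ 0) (h : |x * arg z| < π) :
    log (z ^ (x : ℂ)) = x * log z := by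
  obtain ⟨h₁, h₂⟩ := abs_lt.mp h
  rw [cpow_def_of_ne_zero hz, log_exp, mul_comm] <;>
    simp [log_im, mul_comm] <;> linarith

lemma log_ofReal_mul_cpow {x : ℝ} (hx : 1 < x) {z : ℂ} (hz : z ≠ 0) (b : ℂ) :
    log (x * z) ^ b = log x ^ b * (1 + log z / log x) ^ b := by
  have hlog : 0 < Real.log x := Real.log_pos hx
  have hlog' : (Real.log x : ℂ) ≠ 0 := ofReal_ne_zero.mpr hlog.ne'
  rw [log_ofReal_mul (by linarith) hz, ← ofReal_log (by linarith), ← ofReal_mul_cpow hlog.le,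
    mul_one_add, mul_div_cancel₀ _ hlog']

end Complex

lemma abs_mul_arg_lt_pi {lam θ : ℝ} (hlam : 0 < lam) (hθ : θ < π / lam) {z : ℂ}
    (harg : |arg z| ≤ θ) : |lam * arg z| < π := by
  rw [abs_mul, abs_of_pos hlam, ← lt_div_iff₀' hlam]
  linarith

lemma rn_rpow {lam : ℝ} (hlam : 0 < lam) (n : ℕ) : rn lam n ^ lam = n / lam := by
  rw [rn, one_div, Real.rpow_inv_rpow (by positivity) hlam.ne']

lemma tendsto_rn_atTop {lam : ℝ} (hlam : 0 < lam) : Tendsto (rn lam) atTop atTop :=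
  (tendsto_rpow_atTop (by positivity)).comp
    (tendsto_natCast_atTop_atTop.atTop_div_const hlam)

lemma exp_rn_mul_cpow {lam : ℝ} (hlam : 0 < lam) (n : ℕ) {z : ℂ} (hz : z ≠ 0)
    (harg : |lam * arg z| < π) :
    exp (((rn lam n : ℂ) * z) ^ (lam : ℂ)) =
      ((Real.exp (1 / lam) : ℂ) * z) ^ n * exp (n * phi lam z) := by
  have hr : 0 ≤ rn lam n := Real.rpow_nonneg (by positivity) _
  have hlam' : (lam : ℂ) ≠ 0 := ofReal_ne_zero.mpr hlam.ne'
  have hzn : z ^ n = exp (n * log z) := by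
    conv_lhs => rw [← exp_log hz]
    rw [← exp_nat_mul]
  rw [ofReal_mul_cpow hr, ← ofReal_cpow hr, rn_rpow hlam, mul_pow, hzn, ofReal_exp,
    ← exp_nat_mul, phi, log_cpow_ofReal hz harg, ← exp_add, ← exp_add]
  congr 1
  push_cast
  field_simp
  ring

noncomputable def mainTerm (lam : ℝ) (a b w : ℂ) : ℂ :=
  w ^ a * log w ^ b * exp (w ^ (lam : ℂ))

lemma mainTerm_rn_mul {lam : ℝ} (hlam : 0 < lam) (a b : ℂ) {n : ℕ} (hn : 1 < rn lam n)
    {z : ℂ} (hz : z ≠ 0) (harg : |lam * arg z| < π) :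
    mainTerm lam a b (rn lam n * z) =
      (rn lam n : ℂ) ^ a * log (rn lam n : ℂ) ^ b * ((Real.exp (1 / lam) : ℂ) * z) ^ n *
        (z ^ a * exp (n * phi lam z) * (1 + log z / log (rn lam n : ℂ)) ^ b) := by
  rw [mainTerm, ofReal_mul_cpow (by linarith), log_ofReal_mul_cpow hn hz,
    exp_rn_mul_cpow hlam n hz harg]
  ring

lemma mainTerm_ne_zero (lam : ℝ) (a b : ℂ) {w : ℂ} (hw : 1 < ‖w‖) : mainTerm lam a b w ≠ 0 := by
  have hw0 : w ≠ 0 := norm_pos_iff.mp (by linarith)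
  have hlog : log w ≠ 0 := fun h => by
    have hre := congrArg re h
    rw [log_re, zero_re] at hre
    exact (Real.log_pos hw).ne' hre
  exact mul_ne_zero
    (mul_ne_zero (cpow_ne_zero_iff.mpr (.inl hw0)) (cpow_ne_zero_iff.mpr (.inl hlog)))
    (exp_ne_zero _)

lemma tendsto_div_mainTerm {lam θ : ℝ} {a b : ℂ} {f : ℂ → ℂ}
    (hasym : ∀ δ : ℝ, 0 < δ → ∃ R : ℝ, ∀ z : ℂ, R ≤ ‖z‖ → |arg z| ≤ θ →
      ‖f z - mainTerm lam a b z‖ ≤ δ * ‖mainTerm lam a b z‖) :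
    Tendsto (fun w => f w / mainTerm lam a b w) (cobounded ℂ ⊓ 𝓟 {w | |arg w| ≤ θ}) (𝓝 1) := by
  have hne : ∀ᶠ w in cobounded ℂ ⊓ 𝓟 {w | |arg w| ≤ θ}, mainTerm lam a b w ≠ 0 :=
    ((tendsto_norm_cobounded_atTop.eventually_gt_atTop 1).mono
      fun w hw => mainTerm_ne_zero lam a b hw).filter_mono inf_le_left
  refine (isEquivalent_iff_tendsto_one hne).mp (isLittleO_iff.mpr fun δ hδ => ?_)
  obtain ⟨R, hR⟩ := hasym δ hδ
  exact eventually_inf_principal.mpr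
    ((eventually_cobounded_le_norm R).mono fun w hw hwθ => hR w hw hwθ)

lemma tendsto_ofReal_mul_cobounded {ι : Type*} {l : Filter ι} {r : ι → ℝ}
    (hr : Tendsto r l atTop) {K : Set ℂ} (hK : IsClosed K) (h0 : (0 : ℂ) ∉ K) :
    Tendsto (fun p : ι × ℂ => (r p.1 : ℂ) * p.2) (l ×ˢ 𝓟 K) (cobounded ℂ) := by
  obtain ⟨ε, hε, hball⟩ := Metric.isOpen_iff.mp hK.isOpen_compl 0 h0
  have hεK : ∀ z ∈ K, ε ≤ ‖z‖ := fun z hz => by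
    by_contra! h
    exact hball (by simpa using h) hz
  rw [← tendsto_norm_atTop_iff_cobounded]
  refine tendsto_atTop_mono' _ ?_ ((hr.comp tendsto_fst).atTop_mul_const hε)
  filter_upwards [(hr.eventually_ge_atTop 0).prod_mk (eventually_principal.mpr fun z hz => hz)]
    with p ⟨hp, hpK⟩
  rw [norm_mul, norm_real, Real.norm_of_nonneg hp]
  exact mul_le_mul_of_nonneg_left (hεK _ hpK) hp

lemma tendstoUniformlyOn_comp_ofReal_mul {ι : Type*} {l : Filter ι} {r : ι → ℝ}
    (hr : Tendsto r l atTop) {S K : Set ℂ} (hS : ∀ x : ℝ, 0 < x → ∀ w ∈ S, (x : ℂ) * w ∈ S)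
    (hK : IsClosed K) (hKS : K ⊆ S) (h0 : (0 : ℂ) ∉ K) {F : ℂ → ℂ} {c : ℂ}
    (hF : Tendsto F (cobounded ℂ ⊓ 𝓟 S) (𝓝 c)) :
    TendstoUniformlyOn (fun i z => F (r i * z)) (fun _ => c) l K := by
  have hmap : Tendsto (fun p : ι × ℂ => (r p.1 : ℂ) * p.2) (l ×ˢ 𝓟 K) (cobounded ℂ ⊓ 𝓟 S) := by
    refine tendsto_inf.mpr ⟨tendsto_ofReal_mul_cobounded hr hK h0, tendsto_principal.mpr ?_⟩
    filter_upwards [(hr.eventually_gt_atTop 0).prod_mk (eventually_principal.mpr fun z hz => hz)]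
      with p ⟨hp, hpK⟩ using hS _ hp _ (hKS hpK)
  rw [tendstoUniformlyOn_iff_tendsto]
  exact tendsto_comap_iff.mp (nhds_eq_comap_uniformity (x := c) ▸ hF.comp hmap)

lemma tendsto_one_add_div_log_cpow {ι : Type*} {l : Filter ι} {r : ι → ℝ}
    (hr : Tendsto r l atTop) (c b : ℂ) :
    Tendsto (fun i => (1 + c / log (r i : ℂ)) ^ b) l (𝓝 1) := by
  have hlog : Tendsto (fun i => log (r i : ℂ)) l (cobounded ℂ) := by
    rw [← tendsto_norm_atTop_iff_cobounded]
    refine (tendsto_abs_atTop_atTop.comp (Real.tendsto_log_atTop.comp hr)).congr' ?_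
    filter_upwards [hr.eventually_ge_atTop 0] with i hi
    simp [← ofReal_log hi]
  have hbase : Tendsto (fun i => 1 + c / log (r i : ℂ)) l (𝓝 1) := by
    simpa [div_eq_mul_inv] using
      tendsto_const_nhds.add (tendsto_const_nhds.mul (tendsto_inv₀_cobounded.comp hlog))
  simpa [Function.comp_def] using (continuousAt_cpow_const one_mem_slitPlane).tendsto.comp hbase

lemma tendstoUniformlyOn_rescaled {lam θ : ℝ} {a b : ℂ} {f : ℂ → ℂ} (hlam : 0 < lam)
    (hθ : θ < π / lam)
    (hasym : ∀ δ : ℝ, 0 < δ → ∃ R : ℝ, ∀ z : ℂ, R ≤ ‖z‖ → |arg z| ≤ θ →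
      ‖f z - mainTerm lam a b z‖ ≤ δ * ‖mainTerm lam a b z‖)
    {K : Set ℂ} (hK : IsClosed K) (hKs : K ⊆ {z : ℂ | z ≠ 0 ∧ |arg z| ≤ θ}) :
    TendstoUniformlyOn
      (fun (n : ℕ) (z : ℂ) =>
        f (rn lam n * z) /
            ((rn lam n : ℂ) ^ a * log (rn lam n : ℂ) ^ b * ((Real.exp (1 / lam) : ℂ) * z) ^ n) /
          (z ^ a * exp (n * phi lam z) * (1 + log z / log (rn lam n : ℂ)) ^ b))
      (fun _ => 1) atTop K := by
  have hsector : ∀ x : ℝ, 0 < x → ∀ w ∈ {w : ℂ | |arg w| ≤ θ}, (x : ℂ) * w ∈ {w | |arg w| ≤ θ} :=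
    fun x hx w hw => by simpa [arg_real_mul w hx] using hw
  refine (tendstoUniformlyOn_comp_ofReal_mul (tendsto_rn_atTop hlam) hsector hK
    (fun z hz => (hKs hz).2) (fun h => (hKs h).1 rfl) (tendsto_div_mainTerm hasym)).congr ?_
  filter_upwards [(tendsto_rn_atTop hlam).eventually_gt_atTop 1] with n hn z hz
  obtain ⟨hz0, harg⟩ := hKs hz
  dsimp only
  rw [div_div, mainTerm_rn_mul hlam a b hn hz0 (abs_mul_arg_lt_pi hlam hθ harg)]

theorem stmt_19_general (lam θ : ℝ) (a b : ℂ) (f : ℂ → ℂ)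
    (hlam : 0 < lam) (hθ' : θ < min Real.pi (Real.pi / lam))
    (hasym : ∀ δ : ℝ, 0 < δ → ∃ R : ℝ, ∀ z : ℂ, R ≤ ‖z‖ → |Complex.arg z| ≤ θ →
      ‖f z - z ^ a * Complex.log z ^ b * Complex.exp (z ^ (lam : ℂ))‖
        ≤ δ * ‖z ^ a * Complex.log z ^ b * Complex.exp (z ^ (lam : ℂ))‖) :
    (∀ K : Set ℂ, IsCompact K → K ⊆ {z : ℂ | z ≠ 0 ∧ |Complex.arg z| ≤ θ} →
      TendstoUniformlyOn
        (fun (n : ℕ) (z : ℂ) =>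
          f ((rn lam n : ℂ) * z) /
              ((rn lam n : ℂ) ^ a * Complex.log (rn lam n : ℂ) ^ b *
                ((Real.exp (1 / lam) : ℂ) * z) ^ n) /
            (z ^ a * Complex.exp ((n : ℂ) * phi lam z) *
              (1 + Complex.log z / Complex.log (rn lam n : ℂ)) ^ b))
        (fun _ => (1 : ℂ)) atTop K) ∧
    (∀ z : ℂ, z ≠ 0 → |Complex.arg z| ≤ θ →
      Tendsto
        (fun n : ℕ =>
          f ((rn lam n : ℂ) * z) /
              ((rn lam n : ℂ) ^ a * Complex.log (rn lam n : ℂ) ^ b *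
                ((Real.exp (1 / lam) : ℂ) * z) ^ n) /
            (z ^ a * Complex.exp ((n : ℂ) * phi lam z)))
        atTop (𝓝 1)) := by
  have hθ : θ < π / lam := hθ'.trans_le (min_le_right _ _)
  refine ⟨fun K hK hKs => tendstoUniformlyOn_rescaled hlam hθ hasym hK.isClosed hKs,
    fun z hz harg => ?_⟩
  have hb := tendsto_one_add_div_log_cpow (tendsto_rn_atTop hlam) (log z) b
  have hz' : {z} ⊆ {w : ℂ | w ≠ 0 ∧ |arg w| ≤ θ} := by simpa using ⟨hz, harg⟩
  have hprod := ((tendstoUniformlyOn_rescaled hlam hθ hasym isClosed_singleton hz').tendsto_at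
    rfl).mul hb
  rw [mul_one] at hprod
  refine hprod.congr' ?_
  filter_upwards [hb.eventually_ne one_ne_zero] with n hn
  rw [← div_div, div_mul_cancel₀ _ hn]

/-- re-scaled asymptotics of `f` along the contour: for `f` with
`f(z) = z^a (log z)^b e^{z^λ}(1 + o(1))` uniformly in the sector `|arg z| ≤ θ`,
one has `f(r_n z)/(r_n^a (log r_n)^b (e^{1/λ} z)^n)
  = z^a e^{nφ(z)} (1 + log z/log r_n)^b (1 + o(1))` uniformly on compact subsets
of the punctured sector, and in particular, for each fixed `z` there, the ratio
is asymptotic to `z^a e^{nφ(z)}`. -/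
theorem stmt_19 (lam θ : ℝ) (a b : ℂ) (f : ℂ → ℂ)
    (hlam : 0 < lam) (hθ : 0 < θ) (hθ' : θ < min Real.pi (Real.pi / lam))
    (hasym : ∀ δ : ℝ, 0 < δ → ∃ R : ℝ, ∀ z : ℂ, R ≤ ‖z‖ → |Complex.arg z| ≤ θ →
      ‖f z - z ^ a * Complex.log z ^ b * Complex.exp (z ^ (lam : ℂ))‖
        ≤ δ * ‖z ^ a * Complex.log z ^ b * Complex.exp (z ^ (lam : ℂ))‖) :
    (∀ K : Set ℂ, IsCompact K → K ⊆ {z : ℂ | z ≠ 0 ∧ |Complex.arg z| ≤ θ} →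
      TendstoUniformlyOn
        (fun (n : ℕ) (z : ℂ) =>
          f ((rn lam n : ℂ) * z) /
              ((rn lam n : ℂ) ^ a * Complex.log (rn lam n : ℂ) ^ b *
                ((Real.exp (1 / lam) : ℂ) * z) ^ n) /
            (z ^ a * Complex.exp ((n : ℂ) * phi lam z) *
              (1 + Complex.log z / Complex.log (rn lam n : ℂ)) ^ b))
        (fun _ => (1 : ℂ)) atTop K) ∧
    (∀ z : ℂ, z ≠ 0 → |Complex.arg z| ≤ θ →
      Tendsto
        (fun n : ℕ =>
          f ((rn lam n : ℂ) * z) /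
              ((rn lam n : ℂ) ^ a * Complex.log (rn lam n : ℂ) ^ b *
                ((Real.exp (1 / lam) : ℂ) * z) ^ n) /
            (z ^ a * Complex.exp ((n : ℂ) * phi lam z)))
        atTop (𝓝 1)) :=
  stmt_19_general lam θ a b f hlam hθ' hasym
end
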